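/- If n is prime, then c(1) = n − 1 and c(n) = ((n−1)! − (n−1))/n; in particular, for prime n the only possible cardinalities of 1-cycles are 1 and n. -/

import Mathlib

open Equiv Filter Topology

/-- The cyclic permutation `σ : i ↦ i + 1` of `ZMod n`. -/
def cyc (n : ℕ) : Equiv.Perm (ZMod n) := Equiv.addRight (1 : ZMod n)

lemma cyc_pow_apply (n : ℕ) (k : ℕ) (x : ZMod n) : (cyc n ^ k) x = x + k := by
  induction k with
  | zero => simp
  | succ k ih => rw [pow_succ', Perm.mul_apply, ih]; simp [cyc]; ring

lemma cyc_zpow_apply (n : ℕ) (k : ℤ) (x : ZMod n) : (cyc n ^ k) x = x + k := by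
  induction k using Int.rec with
  | ofNat k => simpa using cyc_pow_apply n k x
  | negSucc k =>
    rw [zpow_negSucc]
    have h : ((cyc n ^ (k+1))⁻¹) x = x + Int.negSucc k ↔ x = (cyc n ^ (k+1)) (x + Int.negSucc k) := by
      rw [Perm.inv_eq_iff_eq]
    rw [h, cyc_pow_apply]
    push_cast [Int.negSucc_eq]
    ring

lemma cyc_pow_eq_addRight (n : ℕ) [NeZero n] (a : ZMod n) : cyc n ^ (a.val) = Equiv.addRight a := by
  ext x; rw [cyc_pow_apply]; simp [ZMod.natCast_val, ZMod.cast_id]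

/-- The equivalence relation `R₂`: `π R₂ π'` iff `π' = σ^i ∘ π` for some integer `i`. -/
def incSetoid (n : ℕ) : Setoid (Equiv.Perm (ZMod n)) where
  r π π' := ∃ i : ℤ, π' = cyc n ^ i * π
  iseqv := by
    constructor
    · exact fun π => ⟨0, by simp⟩
    · rintro π π' ⟨i, rfl⟩
      exact ⟨-i, by rw [← mul_assoc, ← zpow_add]; simp⟩
    · rintro a b c ⟨i, rfl⟩ ⟨j, rfl⟩
      exact ⟨j + i, by rw [← mul_assoc, ← zpow_add]⟩

/-- The set of `R₂`-equivalence classes. -/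
def IncClasses (n : ℕ) := Quotient (incSetoid n)

lemma rel_iff (n : ℕ) [NeZero n] (π π' : Perm (ZMod n)) :
    (incSetoid n).r π π' ↔ ∃ a : ZMod n, ∀ x, π' x = π x + a := by
  constructor
  · rintro ⟨i, rfl⟩
    exact ⟨(i : ZMod n), fun x => by rw [Perm.mul_apply, cyc_zpow_apply]⟩
  · rintro ⟨a, h⟩
    refine ⟨(a.val : ℤ), Equiv.ext fun x => ?_⟩
    rw [Perm.mul_apply, cyc_zpow_apply, h x]
    push_cast [ZMod.natCast_val, ZMod.cast_id]
    rfl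

lemma quot_eq_iff (n : ℕ) [NeZero n] (π π' : Perm (ZMod n)) :
    (⟦π⟧ : IncClasses n) = ⟦π'⟧ ↔ ∃ a : ZMod n, ∀ x, π' x = π x + a := by
  rw [Quotient.eq]
  exact rel_iff n π π'

def nrm (n : ℕ) (π : Perm (ZMod n)) : Perm (ZMod n) := π.trans (Equiv.addRight (-(π 0)))

@[simp] lemma nrm_apply (n : ℕ) (π : Perm (ZMod n)) (x : ZMod n) : nrm n π x = π x - π 0 := by
  simp [nrm, sub_eq_add_neg]

noncomputable def classesEquiv (n : ℕ) [NeZero n] :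
    IncClasses n ≃ {f : Perm (ZMod n) // f 0 = 0} where
  toFun := Quotient.lift (fun π => (⟨nrm n π, by simp⟩ : {f : Perm (ZMod n) // f 0 = 0}))
    (by
      intro π π' h
      obtain ⟨a, h⟩ := (rel_iff n π π').1 h
      ext x
      simp [h])
  invFun f := ⟦f.1⟧
  left_inv := by
    rintro ⟨π⟩
    show (⟦nrm n π⟧ : IncClasses n) = ⟦π⟧
    rw [quot_eq_iff]
    exact ⟨π 0, fun x => by simp⟩
  right_inv := by
    rintro ⟨f, hf⟩
    ext x
    simp [hf]

lemma card_fix_zero (n : ℕ) [NeZero n] :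
    Nat.card {f : Perm (ZMod n) // f 0 = 0} = (n - 1).factorial := by
  classical
  have e1 : {f : Perm (ZMod n) // f 0 = 0} ≃ Perm {x : ZMod n // x ≠ 0} := by
    refine Equiv.symm ?_
    refine (Equiv.Perm.subtypeEquivSubtypePerm (fun x : ZMod n => x ≠ 0)).trans ?_
    refine Equiv.subtypeEquiv (Equiv.refl _) fun f => ?_
    simp only [Equiv.refl_apply]
    constructor
    · intro h; exact h 0 (by simp)
    · intro h x hx
      simp only [ne_eq, not_not] at hx
      subst hx; exact h
  rw [Nat.card_congr e1, Nat.card_eq_fintype_card, Fintype.card_perm, Fintype.card_subtype_compl]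
  simp [ZMod.card]

lemma card_classes (n : ℕ) [NeZero n] : Nat.card (IncClasses n) = (n - 1).factorial := by
  rw [Nat.card_congr (classesEquiv n), card_fix_zero]

/-- The well-defined map `inc(π) ↦ inc(π ∘ σ)` on `R₂`-classes. -/
def incShift (n : ℕ) : IncClasses n → IncClasses n :=
  Quot.map (fun π => π * cyc n)
    (by rintro π π' ⟨i, rfl⟩; exact ⟨i, mul_assoc _ _ _⟩)

@[simp] lemma incShift_mk (n : ℕ) (π : Perm (ZMod n)) :
    incShift n (⟦π⟧ : IncClasses n) = ⟦π * cyc n⟧ := rfl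

@[simp] lemma cyc_apply (n : ℕ) (x : ZMod n) : cyc n x = x + 1 := rfl

lemma linear_of_step (n : ℕ) [NeZero n] (π : Perm (ZMod n)) (a : ZMod n)
    (h : ∀ x, π (x + 1) = π x + a) : ∀ x, π x = π 0 + a * x := by
  have key : ∀ m : ℕ, π (m : ZMod n) = π 0 + a * m := by
    intro m
    induction m with
    | zero => simp
    | succ m ih => push_cast; rw [h, ih]; ring
  intro x
  have : ((x.val : ℕ) : ZMod n) = x := by simp [ZMod.natCast_val, ZMod.cast_id]
  rw [← this, key]

lemma fixed_iff (n : ℕ) [NeZero n] (π : Perm (ZMod n)) :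
    incShift n (⟦π⟧ : IncClasses n) = ⟦π⟧ ↔ ∃ a : ZMod n, ∀ x, π (x + 1) = π x + a := by
  rw [incShift_mk]
  refine eq_comm.trans ((quot_eq_iff n _ _).trans ?_)
  simp only [Perm.mul_apply, cyc_apply]

def fixedSet (n : ℕ) : Set (IncClasses n) := {q | incShift n q = q}

noncomputable def unitsToFixed (n : ℕ) [Fact n.Prime] : (ZMod n)ˣ → fixedSet n :=
  fun c => ⟨⟦Equiv.mulLeft₀ (c : ZMod n) c.ne_zero⟧, by
    show incShift n _ = _
    rw [fixed_iff]
    exact ⟨c, fun x => by simp [mul_add]⟩⟩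

lemma unitsToFixed_bijective (n : ℕ) [Fact n.Prime] : Function.Bijective (unitsToFixed n) := by
  haveI : NeZero n := ⟨(Fact.out : n.Prime).ne_zero⟩
  constructor
  · intro c c' h
    have h2 : (⟦Equiv.mulLeft₀ (c : ZMod n) c.ne_zero⟧ : IncClasses n)
        = ⟦Equiv.mulLeft₀ (c' : ZMod n) c'.ne_zero⟧ := congrArg Subtype.val h
    rw [quot_eq_iff] at h2
    obtain ⟨a, ha⟩ := h2
    have h0 := ha 0
    simp at h0
    have h1 := ha 1
    simp [← h0] at h1
    exact (Units.ext h1).symm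
  · rintro ⟨q, hq⟩
    obtain ⟨π, rfl⟩ := Quotient.exists_rep q
    have hq' : incShift n (⟦π⟧ : IncClasses n) = ⟦π⟧ := hq
    rw [fixed_iff] at hq'
    obtain ⟨a, ha⟩ := hq'
    have hlin := linear_of_step n π a ha
    have hane : a ≠ 0 := by
      intro h0
      have he : π 0 = π 1 := by rw [hlin 0, hlin 1, h0]; ring
      exact one_ne_zero (π.injective he).symm
    refine ⟨Units.mk0 a hane, ?_⟩
    apply Subtype.ext
    show (⟦Equiv.mulLeft₀ a hane⟧ : IncClasses n) = ⟦π⟧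
    rw [quot_eq_iff]
    exact ⟨π 0, fun x => by rw [hlin x]; simp; ring⟩

lemma card_fixedSet (n : ℕ) [Fact n.Prime] : Nat.card (fixedSet n) = n - 1 := by
  haveI : NeZero n := ⟨(Fact.out : n.Prime).ne_zero⟩
  rw [← Nat.card_congr (Equiv.ofBijective _ (unitsToFixed_bijective n)),
    Nat.card_eq_fintype_card, ZMod.card_units_eq_totient, Nat.totient_prime Fact.out]

/-- The 1-cycle (orbit under `inc(ρ) ↦ inc(ρ∘σ)`) of a class `q`. -/
def oneCycle (n : ℕ) (q : IncClasses n) : Set (IncClasses n) :=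
  Set.range fun i : ℕ => (incShift n)^[i] q

lemma cyc_pow_n (n : ℕ) : cyc n ^ n = 1 := by
  ext x; rw [cyc_pow_apply]; simp

lemma incShift_iterate (n : ℕ) (k : ℕ) (π : Perm (ZMod n)) :
    (incShift n)^[k] (⟦π⟧ : IncClasses n) = ⟦π * cyc n ^ k⟧ := by
  induction k with
  | zero => simp; rfl
  | succ k ih => exact (Function.iterate_succ_apply' (incShift n) k _).trans ((congrArg (incShift n) ih).trans
      (congrArg (fun p => (⟦p⟧ : IncClasses n)) (by rw [pow_succ, mul_assoc] : π * cyc n ^ k * cyc n = π * cyc n ^ (k+1))))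

lemma isPeriodic (n : ℕ) (q : IncClasses n) : Function.IsPeriodicPt (incShift n) n q := by
  obtain ⟨π, rfl⟩ := Quotient.exists_rep q
  show (incShift n)^[n] _ = _
  rw [incShift_iterate, cyc_pow_n, mul_one]

lemma minPer_dvd (n : ℕ) (q : IncClasses n) :
    Function.minimalPeriod (incShift n) q ∣ n :=
  (isPeriodic n q).minimalPeriod_dvd

lemma mem_periodicPts (n : ℕ) (hn : 0 < n) (q : IncClasses n) :
    q ∈ Function.periodicPts (incShift n) :=
  Function.mk_mem_periodicPts hn (isPeriodic n q)

lemma oneCycle_eq_image (n : ℕ) (hn : 0 < n) (q : IncClasses n) :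
    oneCycle n q
      = (fun i : ℕ => (incShift n)^[i] q) '' Set.Iio (Function.minimalPeriod (incShift n) q) := by
  apply Set.Subset.antisymm
  · rintro x ⟨i, rfl⟩
    refine ⟨i % Function.minimalPeriod (incShift n) q, ?_, ?_⟩
    · exact Set.mem_Iio.2 (Nat.mod_lt _ (Function.minimalPeriod_pos_of_mem_periodicPts
        (mem_periodicPts n hn q)))
    · exact Function.iterate_mod_minimalPeriod_eq
  · rintro x ⟨i, _, rfl⟩
    exact ⟨i, rfl⟩

lemma ncard_oneCycle (n : ℕ) (hn : 0 < n) (q : IncClasses n) :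
    (oneCycle n q).ncard = Function.minimalPeriod (incShift n) q := by
  rw [oneCycle_eq_image n hn q,
    Set.ncard_image_of_injOn Function.iterate_injOn_Iio_minimalPeriod]
  rw [← Nat.card_coe_set_eq, Nat.card_eq_card_toFinset]
  simp

lemma iterate_mod (n : ℕ) (_hn : 0 < n) (m : ℕ) (q : IncClasses n) :
    (incShift n)^[m] q = (incShift n)^[m % n] q :=
  ((isPeriodic n q).iterate_mod_apply m).symm

lemma mem_oneCycle_self (n : ℕ) (q : IncClasses n) : q ∈ oneCycle n q := ⟨0, rfl⟩

lemma iterate_n_mul (n : ℕ) (m : ℕ) (q : IncClasses n) :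
    (incShift n)^[n * m] q = q := by
  induction m with
  | zero => simp
  | succ m ih => rw [Nat.mul_succ, Function.iterate_add_apply, isPeriodic n q, ih]

lemma oneCycle_iterate (n : ℕ) (hn : 0 < n) (k : ℕ) (q : IncClasses n) :
    oneCycle n ((incShift n)^[k] q) = oneCycle n q := by
  apply Set.Subset.antisymm
  · rintro x ⟨i, rfl⟩
    exact ⟨i + k, by show (incShift n)^[i + k] q = _; rw [Function.iterate_add_apply]⟩
  · rintro x ⟨i, rfl⟩
    refine ⟨i + (n - k % n), ?_⟩
    show (incShift n)^[i + (n - k % n)] ((incShift n)^[k] q) = (incShift n)^[i] q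
    rw [← Function.iterate_add_apply]
    have hk : i + (n - k % n) + k = i + n * (k / n + 1) := by
      have h2 := Nat.div_add_mod k n
      have hr := Nat.mod_lt k hn
      rw [Nat.mul_add, Nat.mul_one]
      omega
    rw [hk, Function.iterate_add_apply, iterate_n_mul]

lemma mem_oneCycle_eq (n : ℕ) (hn : 0 < n) {q q' : IncClasses n} (h : q' ∈ oneCycle n q) :
    oneCycle n q' = oneCycle n q := by
  obtain ⟨k, rfl⟩ := h
  exact oneCycle_iterate n hn k q

/-- `c(d)`: the number of 1-cycles of cardinality `d`. -/
noncomputable def numCycles (n d : ℕ) : ℕ :=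
  Set.ncard {S : Set (IncClasses n) | (∃ q, S = oneCycle n q) ∧ S.ncard = d}

lemma oneCycle_of_fixed (n : ℕ) {q : IncClasses n} (h : incShift n q = q) :
    oneCycle n q = {q} := by
  apply Set.Subset.antisymm
  · rintro x ⟨i, rfl⟩
    show (incShift n)^[i] q ∈ ({q} : Set _)
    rw [Function.IsFixedPt.iterate h i]
    rfl
  · rintro x hx
    rw [Set.mem_singleton_iff] at hx
    rw [hx]
    exact mem_oneCycle_self n q

lemma ncard_dichotomy (n : ℕ) (hn : n.Prime) (q : IncClasses n) :
    (oneCycle n q).ncard = 1 ∨ (oneCycle n q).ncard = n := by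
  rw [ncard_oneCycle n hn.pos q]
  exact (Nat.Prime.eq_one_or_self_of_dvd hn _ (minPer_dvd n q)).imp id id

lemma fixed_iff_ncard_one (n : ℕ) (hn : 0 < n) (q : IncClasses n) :
    incShift n q = q ↔ (oneCycle n q).ncard = 1 := by
  rw [ncard_oneCycle n hn q, Function.minimalPeriod_eq_one_iff_isFixedPt]
  rfl

lemma setA1_eq (n : ℕ) (hn : 0 < n) :
    {S : Set (IncClasses n) | (∃ q, S = oneCycle n q) ∧ S.ncard = 1}
      = (fun q => ({q} : Set (IncClasses n))) '' fixedSet n := by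
  ext S
  constructor
  · rintro ⟨⟨q, rfl⟩, hcard⟩
    have hfix : incShift n q = q := (fixed_iff_ncard_one n hn q).2 hcard
    exact ⟨q, hfix, (oneCycle_of_fixed n hfix).symm⟩
  · rintro ⟨q, hq, rfl⟩
    have : oneCycle n q = {q} := oneCycle_of_fixed n hq
    exact ⟨⟨q, this.symm⟩, by simp⟩

lemma numCycles_one (n : ℕ) [Fact n.Prime] : numCycles n 1 = n - 1 := by
  have hn : 0 < n := (Fact.out : n.Prime).pos
  rw [numCycles, setA1_eq n hn,
    Set.ncard_image_of_injective _ (fun a b h => Set.singleton_eq_singleton_iff.1 h),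
    ← card_fixedSet n, Nat.card_coe_set_eq]

lemma key_count (n : ℕ) [Fact n.Prime] :
    (n - 1).factorial - (n - 1) = numCycles n n * n := by
  classical
  haveI : NeZero n := ⟨(Fact.out : n.Prime).ne_zero⟩
  have hp : n.Prime := Fact.out
  haveI : Finite (IncClasses n) := Quotient.finite _
  haveI : Fintype (IncClasses n) := Fintype.ofFinite _
  set As : Set (Set (IncClasses n)) :=
    {S : Set (IncClasses n) | (∃ q, S = oneCycle n q) ∧ S.ncard = n} with hAs
  set A : Finset (Set (IncClasses n)) := As.toFinset with hA
  set N : Finset (IncClasses n) := Finset.univ.filter (fun q => incShift n q ≠ q) with hN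
  set F : Finset (IncClasses n) := Finset.univ.filter (fun q => incShift n q = q) with hF
  -- main fiberwise count
  have hmap : ∀ q ∈ N, oneCycle n q ∈ A := by
    intro q hq
    rw [hN, Finset.mem_filter] at hq
    rw [hA, Set.mem_toFinset, hAs]
    refine ⟨⟨q, rfl⟩, ?_⟩
    rcases ncard_dichotomy n hp q with h | h
    · exact absurd ((fixed_iff_ncard_one n hp.pos q).2 h) hq.2
    · exact h
  have hcount := Finset.card_eq_sum_card_fiberwise hmap
  have hfiber : ∀ S ∈ A, (N.filter (fun q => oneCycle n q = S)).card = n := by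
    intro S hS
    rw [hA, Set.mem_toFinset, hAs] at hS
    obtain ⟨⟨q0, rfl⟩, hcard⟩ := hS
    have hfil : N.filter (fun q => oneCycle n q = oneCycle n q0) = (oneCycle n q0).toFinset := by
      ext q
      rw [Finset.mem_filter, Set.mem_toFinset, hN, Finset.mem_filter]
      constructor
      · rintro ⟨_, h⟩
        rw [← h]
        exact mem_oneCycle_self n q
      · intro hq
        have heq : oneCycle n q = oneCycle n q0 := mem_oneCycle_eq n hp.pos hq
        refine ⟨⟨Finset.mem_univ q, ?_⟩, heq⟩
        intro hfix
        have h1 : (oneCycle n q).ncard = 1 := (fixed_iff_ncard_one n hp.pos q).1 hfix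
        rw [heq, hcard] at h1
        exact hp.one_lt.ne' h1
    rw [hfil, ← Set.ncard_eq_toFinset_card', hcard]
  have hNcard : N.card = A.card * n := by
    rw [hcount, Finset.sum_congr rfl hfiber, Finset.sum_const, smul_eq_mul]
  -- cardinalities
  have hFcard : F.card = n - 1 := by
    have h1 : (fixedSet n).ncard = n - 1 := by
      rw [← Nat.card_coe_set_eq]; exact card_fixedSet n
    rw [Set.ncard_eq_toFinset_card'] at h1
    rw [← h1]
    congr 1
    ext q
    simp [hF, fixedSet]
    exact (Set.mem_toFinset (s := fixedSet n)).symm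
  have htot : F.card + N.card = (n - 1).factorial := by
    rw [hF, hN, Finset.card_filter_add_card_filter_not, Finset.card_univ,
      ← Nat.card_eq_fintype_card, card_classes n]
  have hnum : numCycles n n = A.card := by
    rw [numCycles, ← hAs, Set.ncard_eq_toFinset_card', hA]
  rw [hnum, ← hNcard, ← htot, hFcard]
  omega

/-- If `n` is prime, then `c(1) = n − 1` and `c(n) = ((n−1)! − (n−1))/n` (the division being
exact); in particular every 1-cycle has cardinality `1` or `n`. -/
theorem stmt12 (n : ℕ) (hn : n.Prime) :
    numCycles n 1 = n - 1 ∧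
    n ∣ ((n - 1).factorial - (n - 1)) ∧
    numCycles n n = ((n - 1).factorial - (n - 1)) / n ∧
    ∀ q : IncClasses n, (oneCycle n q).ncard = 1 ∨ (oneCycle n q).ncard = n := by
  haveI : Fact n.Prime := ⟨hn⟩
  have h1 := numCycles_one n
  have hk := key_count n
  refine ⟨h1, ⟨numCycles n n, by rw [hk, mul_comm]⟩, ?_, fun q => ncard_dichotomy n hn q⟩
  rw [hk, Nat.mul_div_cancel _ hn.pos]
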